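/- arXiv:1608.06269 — 3 statements merged into one kernel-verified Lean document; each statement's English description precedes it below -/
import Mathlib

section
/- Let X be a compact metric space and f : X → X continuous. If the induced map f̄ on K(X) is densely chaotic (the set of Li–Yorke pairs of f̄ is dense in K(X) × K(X)), then the set of distal pairs of f is a first category (meagre) subset of X × X. -/
/-
A distal pair lies in one of the countably many closed sets `E δ N` of pairs whose orbits stay
`δ` apart from time `N` on, so it suffices that each `E δ N` has empty interior. Near any pair
`(x, y)` there is, by density, a pair `(K, L)` of compact sets Hausdorff-close to `({x}, {y})`
whose `f̄`-orbits come `δ`-close at some time `n ≥ N`. Then some `a ∈ K`, `b ∈ L` satisfy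
`d(fⁿa, fⁿb) < δ`, and `(a, b)` is a pair close to `(x, y)` outside `E δ N`.
-/

open Filter Metric TopologicalSpace

/-- The induced map on the hyperspace of nonempty compact subsets. -/
noncomputable def inducedMap {X : Type*} [MetricSpace X] (f : X → X) (hf : Continuous f) :
    NonemptyCompacts X → NonemptyCompacts X :=
  fun K => ⟨⟨f '' K, K.isCompact.image hf⟩, K.nonempty.image f⟩

namespace TopologicalSpace.NonemptyCompacts

variable {X : Type*} [MetricSpace X]

theorem exists_dist_lt_of_dist_lt {K L : NonemptyCompacts X} {r : ℝ} (h : dist K L < r)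
    {a : X} (ha : a ∈ K) : ∃ b ∈ L, dist a b < r :=
  exists_dist_lt_of_hausdorffDist_lt ha h <|
    hausdorffEDist_ne_top_of_nonempty_of_bounded K.nonempty L.nonempty
      K.isCompact.isBounded L.isCompact.isBounded

theorem dist_lt_of_dist_singleton_lt {K : NonemptyCompacts X} {x : X} {r : ℝ}
    (h : dist K {x} < r) {a : X} (ha : a ∈ K) : dist a x < r := by
  obtain ⟨_, rfl, hax⟩ := exists_dist_lt_of_dist_lt h ha
  exact hax

end TopologicalSpace.NonemptyCompacts

section InducedMap

variable {X : Type*} [MetricSpace X] {f : X → X}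

theorem coe_inducedMap_iterate (hf : Continuous f) (K : NonemptyCompacts X) (n : ℕ) :
    ((inducedMap f hf)^[n] K : Set X) = f^[n] '' K := by
  induction n with
  | zero => simp
  | succ n ih =>
    rw [Function.iterate_succ_apply', Function.iterate_succ', Set.image_comp, ← ih]
    rfl

def eventuallySeparated (f : X → X) (δ : ℝ) (N : ℕ) : Set (X × X) :=
  {p | ∀ n, N ≤ n → δ ≤ dist (f^[n] p.1) (f^[n] p.2)}

theorem isClosed_eventuallySeparated (hf : Continuous f) (δ : ℝ) (N : ℕ) :
    IsClosed (eventuallySeparated f δ N) := by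
  simp only [eventuallySeparated, Set.ofPred_forall]
  exact isClosed_biInter fun n _ => isClosed_le continuous_const <|
    ((hf.iterate n).comp continuous_fst).dist ((hf.iterate n).comp continuous_snd)

theorem setOf_distal_subset_iUnion_eventuallySeparated (f : X → X) :
    {p : X × X | 0 < liminf (fun n => dist (f^[n] p.1) (f^[n] p.2)) atTop} ⊆
      ⋃ (k : ℕ) (N : ℕ), eventuallySeparated f (1 / (k + 1)) N := by
  intro p hp
  obtain ⟨k, hk⟩ := exists_nat_one_div_lt (Set.mem_ofPred_eq ▸ hp)
  obtain ⟨N, hN⟩ := eventually_atTop.1 <|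
    eventually_lt_of_lt_liminf hk (isBoundedUnder_of ⟨0, fun _ => dist_nonneg⟩)
  exact Set.mem_iUnion₂.2 ⟨k, N, fun n hn => (hN n hn).le⟩

variable [CompactSpace X]

theorem frequently_exists_dist_iterate_lt_of_liminf_eq_zero (hf : Continuous f)
    {K L : NonemptyCompacts X}
    (h : liminf (fun n => dist ((inducedMap f hf)^[n] K) ((inducedMap f hf)^[n] L)) atTop = 0)
    {δ : ℝ} (hδ : 0 < δ) :
    ∃ᶠ n in atTop, ∃ a ∈ K, ∃ b ∈ L, dist (f^[n] a) (f^[n] b) < δ := by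
  have hbdd : IsCoboundedUnder (· ≥ ·) atTop
      (fun n => dist ((inducedMap f hf)^[n] K) ((inducedMap f hf)^[n] L)) :=
    isCoboundedUnder_ge_of_le _ fun _ =>
      dist_le_diam_of_mem isCompact_univ.isBounded (Set.mem_univ _) (Set.mem_univ _)
  refine (frequently_lt_of_liminf_lt hbdd (h ▸ hδ)).mono fun n hn => ?_
  obtain ⟨a, ha⟩ := K.nonempty
  have hfa : f^[n] a ∈ ((inducedMap f hf)^[n] K : Set X) := by
    rw [coe_inducedMap_iterate]
    exact Set.mem_image_of_mem _ ha
  obtain ⟨_, hb, hab⟩ := NonemptyCompacts.exists_dist_lt_of_dist_lt hn hfa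
  rw [← SetLike.mem_coe, coe_inducedMap_iterate] at hb
  obtain ⟨b, hb, rfl⟩ := hb
  exact ⟨a, ha, b, hb, hab⟩

theorem isNowhereDense_eventuallySeparated (hf : Continuous f)
    (hprox : Dense {P : NonemptyCompacts X × NonemptyCompacts X |
      liminf (fun n => dist ((inducedMap f hf)^[n] P.1) ((inducedMap f hf)^[n] P.2)) atTop = 0})
    {δ : ℝ} (hδ : 0 < δ) (N : ℕ) :
    IsNowhereDense (eventuallySeparated f δ N) := by
  refine (isClosed_eventuallySeparated hf δ N).isNowhereDense_iff.2 <|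
    interior_eq_empty_iff_dense_compl.2 <| Metric.dense_iff.2 fun p r hr => ?_
  obtain ⟨Q, hQp, hQ⟩ := Metric.dense_iff.1 hprox ({p.1}, {p.2}) r hr
  obtain ⟨n, hn, a, ha, b, hb, hab⟩ :=
    frequently_atTop.1 (frequently_exists_dist_iterate_lt_of_liminf_eq_zero hf hQ hδ) N
  rw [mem_ball, Prod.dist_eq, max_lt_iff] at hQp
  refine ⟨(a, b), ?_, fun hsep => (hsep n hn).not_gt hab⟩
  rw [mem_ball, Prod.dist_eq, max_lt_iff]
  exact ⟨NonemptyCompacts.dist_lt_of_dist_singleton_lt hQp.1 ha,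
    NonemptyCompacts.dist_lt_of_dist_singleton_lt hQp.2 hb⟩

end InducedMap

/-- If the induced map `f̄` on the hyperspace `K(X)` is densely chaotic (its set of
Li–Yorke pairs is dense in `K(X) × K(X)`), then the set of distal pairs of `f`
is meagre (of first category) in `X × X`. -/
theorem distal_meagre_of_denselyChaotic_induced {X : Type*} [MetricSpace X] [CompactSpace X]
    (f : X → X) (hf : Continuous f)
    (hdense : Dense {p : NonemptyCompacts X × NonemptyCompacts X |
      liminf (fun n => dist ((inducedMap f hf)^[n] p.1) ((inducedMap f hf)^[n] p.2)) atTop = 0 ∧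
      0 < limsup (fun n => dist ((inducedMap f hf)^[n] p.1) ((inducedMap f hf)^[n] p.2)) atTop}) :
    IsMeagre {p : X × X |
      0 < liminf (fun n => dist (f^[n] p.1) (f^[n] p.2)) atTop} := by
  have hprox := hdense.mono fun _ hP => hP.1
  refine (?_ : IsMeagre _).mono (setOf_distal_subset_iUnion_eventuallySeparated f)
  exact isMeagre_iUnion fun k => isMeagre_iUnion fun N =>
    (isNowhereDense_eventuallySeparated hf hprox (by positivity) N).isMeagre
end

section
/- Let f be a continuous self-map of a compact metric space X, and g = f^k for some k ≥ 1. Then limsup_{n→∞} d(fⁿx, fⁿy) > 0 if and only if limsup_{n→∞} d(gⁿx, gⁿy) > 0; consequently C₂(f) = C₂(g) and the set of Li–Yorke pairs of f equals that of g. -/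
/-!
The finitely many iterates `f^[s]`, `s ≤ k`, of a uniformly continuous map (every continuous map
of a compact space is one) are uniformly equicontinuous. Writing a time `n` as `k q + r` with
`r < k`, closeness of the `f^[k]`-orbits of `x, y` at time `q` thus forces closeness of their
`f`-orbits at time `n`; and closeness of the `f`-orbits at time `m` forces closeness at the next
multiple of `k`, which is at most `k` steps later. So `f` and `f^[k]` have the same asymptotic pairs
(`limsup d = 0`) and the same proximal pairs (`liminf d = 0`).
-/

open Filter Metric Topology Uniformity

section RealSequence

variable {ι : Type*} {l : Filter ι} {u : ι → ℝ}

lemma limsup_pos_iff_not_tendsto_zero [l.NeBot] (h0 : 0 ≤ u)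
    (hbdd : IsBoundedUnder (· ≤ ·) l u) : 0 < limsup u l ↔ ¬Tendsto u l (𝓝 0) := by
  rw [iff_not_comm, not_lt]
  refine ⟨fun h => h.limsup_eq.le, fun h => ?_⟩
  refine tendsto_of_le_liminf_of_limsup_le ?_ h hbdd (isBoundedUnder_of ⟨0, h0⟩)
  exact le_liminf_of_le hbdd.isCoboundedUnder_ge (.of_forall h0)

lemma liminf_eq_zero_iff_frequently_lt [l.NeBot] (h0 : 0 ≤ u)
    (hbdd : IsBoundedUnder (· ≤ ·) l u) : liminf u l = 0 ↔ ∀ ε > 0, ∃ᶠ i in l, u i < ε := by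
  refine ⟨fun h ε hε => frequently_lt_of_liminf_lt hbdd.isCoboundedUnder_ge (h ▸ hε),
    fun h => le_antisymm ?_ (le_liminf_of_le hbdd.isCoboundedUnder_ge (.of_forall h0))⟩
  refine le_of_forall_pos_le_add fun ε hε => ?_
  rw [zero_add]
  exact liminf_le_of_frequently_le ((h ε hε).mono fun _ => le_of_lt) (isBoundedUnder_of ⟨0, h0⟩)

end RealSequence

section Metric

variable {X ι : Type*} [PseudoMetricSpace X] [BoundedSpace X] {l : Filter ι}

lemma isBoundedUnder_dist (p : ι → X × X) :
    IsBoundedUnder (· ≤ ·) l fun i => dist (p i).1 (p i).2 := by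
  obtain ⟨C, hC⟩ := isBounded_iff.1 (Bornology.isBounded_univ.2 ‹BoundedSpace X›)
  exact isBoundedUnder_of ⟨C, fun i => hC trivial trivial⟩

lemma limsup_dist_pos_iff_not_tendsto_uniformity [l.NeBot] (p : ι → X × X) :
    0 < limsup (fun i => dist (p i).1 (p i).2) l ↔ ¬Tendsto p l (𝓤 X) := by
  rw [limsup_pos_iff_not_tendsto_zero (fun _ => dist_nonneg) (isBoundedUnder_dist p),
    tendsto_uniformity_iff_dist_tendsto_zero]

lemma liminf_dist_eq_zero_iff_frequently_mem_uniformity [l.NeBot] (p : ι → X × X) :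
    liminf (fun i => dist (p i).1 (p i).2) l = 0 ↔ ∀ U ∈ 𝓤 X, ∃ᶠ i in l, p i ∈ U := by
  rw [liminf_eq_zero_iff_frequently_lt (fun _ => dist_nonneg) (isBoundedUnder_dist p),
    uniformity_basis_dist.forall_iff fun U V hUV h => h.mono fun _ hi => hUV hi]
  rfl

end Metric

section Iterate

variable {X : Type*} [UniformSpace X] {f : X → X} {k : ℕ}

lemma UniformContinuous.eventually_iterate_le_mem (hf : UniformContinuous f) (k : ℕ)
    {U : Set (X × X)} (hU : U ∈ 𝓤 X) : ∀ᶠ p in 𝓤 X, ∀ s ≤ k, (f^[s] p.1, f^[s] p.2) ∈ U :=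
  (Set.finite_Iic k).eventually_all.2 fun s _ => UniformContinuous.iterate f s hf hU

lemma tendsto_iterate_mul_uniformity_iff (hf : UniformContinuous f) (hk : 0 < k) (x y : X) :
    Tendsto (fun n => (f^[k * n] x, f^[k * n] y)) atTop (𝓤 X) ↔
      Tendsto (fun n => (f^[n] x, f^[n] y)) atTop (𝓤 X) := by
  refine ⟨fun h U hU => ?_,
    fun h => h.comp (tendsto_atTop_mono (fun n => Nat.le_mul_of_pos_left n hk) tendsto_id)⟩
  obtain ⟨N, hN⟩ := eventually_atTop.1 (h.eventually (hf.eventually_iterate_le_mem k hU))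
  refine eventually_atTop.2 ⟨k * N, fun n hn => ?_⟩
  have hmem := hN (n / k) ((Nat.le_div_iff_mul_le hk).2 (by linarith)) (n % k) (Nat.mod_lt n hk).le
  simpa only [← Function.iterate_add_apply, Nat.mod_add_div] using hmem

lemma frequently_iterate_mul_mem_uniformity_iff (hf : UniformContinuous f) (hk : 0 < k)
    (x y : X) :
    (∀ U ∈ 𝓤 X, ∃ᶠ n in atTop, (f^[k * n] x, f^[k * n] y) ∈ U) ↔
      ∀ U ∈ 𝓤 X, ∃ᶠ n in atTop, (f^[n] x, f^[n] y) ∈ U := by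
  refine ⟨fun h U hU =>
    (tendsto_atTop_mono (fun n => Nat.le_mul_of_pos_left n hk) tendsto_id).frequently (h U hU),
    fun h U hU => frequently_atTop.2 fun N => ?_⟩
  obtain ⟨m, hm, hmem⟩ := frequently_atTop.1 (h _ (hf.eventually_iterate_le_mem k hU)) (k * N)
  have hdiv := Nat.mod_add_div m k
  have hmod := Nat.mod_lt m hk
  refine ⟨m / k + 1, Nat.le_succ_of_le ((Nat.le_div_iff_mul_le hk).2 (by linarith)), ?_⟩
  have hround : k - m % k + m = k * (m / k + 1) := by rw [Nat.mul_succ]; omega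
  simpa only [← Function.iterate_add_apply, hround] using hmem (k - m % k) (Nat.sub_le _ _)

end Iterate

/-- For a continuous self-map `f` of a compact metric space and `g = f^k` with `k ≥ 1`,
`limsup_n d(f^n x, f^n y) > 0` iff `limsup_n d(g^n x, g^n y) > 0`; consequently
`C₂(f) = C₂(g)` and the set of Li–Yorke pairs of `f` equals that of `g`. -/
theorem limsup_pos_iterate_iff {X : Type*} [MetricSpace X] [CompactSpace X]
    (f : X → X) (hf : Continuous f) (k : ℕ) (hk : 1 ≤ k) :
    (∀ x y : X,
      0 < limsup (fun n => dist (f^[n] x) (f^[n] y)) atTop ↔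
      0 < limsup (fun n => dist ((f^[k])^[n] x) ((f^[k])^[n] y)) atTop) ∧
    {p : X × X | 0 < limsup (fun n => dist (f^[n] p.1) (f^[n] p.2)) atTop} =
      {p : X × X | 0 < limsup (fun n => dist ((f^[k])^[n] p.1) ((f^[k])^[n] p.2)) atTop} ∧
    {p : X × X | liminf (fun n => dist (f^[n] p.1) (f^[n] p.2)) atTop = 0 ∧
        0 < limsup (fun n => dist (f^[n] p.1) (f^[n] p.2)) atTop} =
      {p : X × X | liminf (fun n => dist ((f^[k])^[n] p.1) ((f^[k])^[n] p.2)) atTop = 0 ∧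
        0 < limsup (fun n => dist ((f^[k])^[n] p.1) ((f^[k])^[n] p.2)) atTop} := by
  have hfu := CompactSpace.uniformContinuous_of_continuous hf
  have C₂ : ∀ x y : X, 0 < limsup (fun n => dist (f^[n] x) (f^[n] y)) atTop ↔
      0 < limsup (fun n => dist ((f^[k])^[n] x) ((f^[k])^[n] y)) atTop := fun x y => by
    simp only [← Function.iterate_mul]
    rw [limsup_dist_pos_iff_not_tendsto_uniformity fun n => (f^[n] x, f^[n] y),
      limsup_dist_pos_iff_not_tendsto_uniformity fun n => (f^[k * n] x, f^[k * n] y),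
      tendsto_iterate_mul_uniformity_iff hfu hk]
  have C₁ : ∀ x y : X, liminf (fun n => dist (f^[n] x) (f^[n] y)) atTop = 0 ↔
      liminf (fun n => dist ((f^[k])^[n] x) ((f^[k])^[n] y)) atTop = 0 := fun x y => by
    simp only [← Function.iterate_mul]
    rw [liminf_dist_eq_zero_iff_frequently_mem_uniformity fun n => (f^[n] x, f^[n] y),
      liminf_dist_eq_zero_iff_frequently_mem_uniformity fun n => (f^[k * n] x, f^[k * n] y),
      frequently_iterate_mul_mem_uniformity_iff hfu hk]
  exact ⟨C₂, Set.ext fun p => C₂ p.1 p.2, Set.ext fun p => and_congr (C₁ p.1 p.2) (C₂ p.1 p.2)⟩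
end

section
/- Let X be a compact metric space and f : X → X continuous. If the induced map f̄ on the hyperspace K(X) is densely chaotic, then X has no isolated points. -/
open Filter Metric TopologicalSpace

/-!
If `x` is isolated in `X`, then `{x}` is isolated in `K(X)` (the Hausdorff metric induces the
Vietoris topology), so `({x}, {x})` is isolated in `K(X) × K(X)` and a dense set of pairs must
contain it. But a diagonal pair is never Li–Yorke: its distance sequence is identically zero.
-/

def IsLiYorkePair {α : Type*} [PseudoMetricSpace α] (g : α → α) (a b : α) : Prop :=
  liminf (fun n => dist (g^[n] a) (g^[n] b)) atTop = 0 ∧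
    0 < limsup (fun n => dist (g^[n] a) (g^[n] b)) atTop

theorem not_isLiYorkePair_self {α : Type*} [PseudoMetricSpace α] (g : α → α) (a : α) :
    ¬IsLiYorkePair g a a := by
  simp [IsLiYorkePair, limsup_const]

theorem Dense.mem_of_isOpen_singleton {α : Type*} [TopologicalSpace α] {s : Set α} (hs : Dense s)
    {a : α} (ha : IsOpen {a}) : a ∈ s := by
  obtain ⟨b, rfl, hb⟩ := hs.inter_open_nonempty {a} ha (Set.singleton_nonempty a)
  exact hb

theorem TopologicalSpace.NonemptyCompacts.isOpen_singleton_singleton {α : Type*}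
    [TopologicalSpace α] {x : α} (hx : IsOpen {x}) : IsOpen {({x} : NonemptyCompacts α)} := by
  convert isOpen_subsets_of_isOpen hx using 1
  ext K
  rw [Set.mem_singleton_iff, Set.mem_ofPred_eq, K.nonempty.subset_singleton_iff, ← coe_singleton,
    SetLike.coe_set_eq]

theorem no_isolated_points_of_denselyChaotic_induced_general
    {X : Type*} [MetricSpace X] (f : X → X) (hf : Continuous f)
    (hdense : Dense {p : NonemptyCompacts X × NonemptyCompacts X |
      liminf (fun n => dist ((inducedMap f hf)^[n] p.1) ((inducedMap f hf)^[n] p.2)) atTop = 0 ∧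
      0 < limsup (fun n => dist ((inducedMap f hf)^[n] p.1) ((inducedMap f hf)^[n] p.2)) atTop}) :
    ∀ x : X, (nhdsWithin x {x}ᶜ).NeBot := by
  intro x
  by_contra hx
  rw [not_neBot, ← isOpen_singleton_iff_punctured_nhds] at hx
  have hS := NonemptyCompacts.isOpen_singleton_singleton hx
  have hSS : IsOpen {(({x} : NonemptyCompacts X), ({x} : NonemptyCompacts X))} := by
    simpa only [Set.singleton_prod_singleton] using hS.prod hS
  have hLiYorke := hdense.mem_of_isOpen_singleton hSS
  exact not_isLiYorkePair_self (inducedMap f hf) {x} hLiYorke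

/-- If the induced map `f̄` on the hyperspace `K(X)` is densely chaotic, then `X` has no
isolated points. -/
theorem no_isolated_points_of_denselyChaotic_induced
    {X : Type*} [MetricSpace X] [CompactSpace X] (f : X → X) (hf : Continuous f)
    (hdense : Dense {p : NonemptyCompacts X × NonemptyCompacts X |
      liminf (fun n => dist ((inducedMap f hf)^[n] p.1) ((inducedMap f hf)^[n] p.2)) atTop = 0 ∧
      0 < limsup (fun n => dist ((inducedMap f hf)^[n] p.1) ((inducedMap f hf)^[n] p.2)) atTop}) :
    ∀ x : X, (nhdsWithin x {x}ᶜ).NeBot :=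
  no_isolated_points_of_denselyChaotic_induced_general f hf hdense
end
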